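/- arXiv:0806.1255 — 2 statements merged into one kernel-verified Lean document; each statement's English description precedes it below -/
import Mathlib

section
/- Fix 0 ≤ k ≤ n and a vertex index m ∈ {0,…,n}. The Whitney forms φ_σ corresponding to the k-dimensional subsimplices of T containing the vertex x_m are linearly independent over the ring of polynomials: if polynomial functions p_σ on ℝⁿ, indexed by the increasing maps σ : {0,…,k} → {0,…,n} with m ∈ ⟦σ⟧, satisfy Σ_σ p_σ(x) φ_σ(x) = 0 in Alt^k ℝⁿ for every x ∈ ℝⁿ, then every p_σ is identically zero. -/
open scoped BigOperators

noncomputable section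

/-- The wedge product of `k` linear functionals on `ℝⁿ`:
`(wedge f) v = det (matrix whose (j,i) entry is f i (v j))`. -/
def wedge {n k : ℕ} (f : Fin k → ((Fin n → ℝ) →ₗ[ℝ] ℝ)) :
    (Fin n → ℝ) [⋀^Fin k]→ₗ[ℝ] ℝ :=
  (Matrix.detRowAlternating : (Fin k → ℝ) [⋀^Fin k]→ₗ[ℝ] ℝ).compLinearMap
    (LinearMap.pi f)

/-- The wedge product of a linear functional (a `1`-form) with an alternating `k`-form on `ℝⁿ`. -/
def oneWedge {n k : ℕ} (f : (Fin n → ℝ) →ₗ[ℝ] ℝ)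
    (η : (Fin n → ℝ) [⋀^Fin k]→ₗ[ℝ] ℝ) :
    (Fin n → ℝ) [⋀^Fin (k + 1)]→ₗ[ℝ] ℝ :=
  ((TensorProduct.lid ℝ ℝ).toLinearMap.compAlternatingMap
    (AlternatingMap.domCoprod
      ((AlternatingMap.ofSubsingleton ℝ (Fin n → ℝ) ℝ (0 : Fin 1)) f) η)).domDomCongr
    (finSumFinEquiv.trans (finCongr (Nat.add_comm 1 k)))

/-- A nondegenerate simplex in `ℝⁿ` with vertices `x 0, …, x n`, together with its barycentric
coordinate functions `λ_i = dlam i + c i`: the unique affine functions with `λ_i (x j) = δ_{ij}`,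
`dlam i` being the linear part `dλ_i`. -/
structure Simplex (n : ℕ) where
  x : Fin (n + 1) → (Fin n → ℝ)
  affineIndep : AffineIndependent ℝ x
  dlam : Fin (n + 1) → ((Fin n → ℝ) →ₗ[ℝ] ℝ)
  c : Fin (n + 1) → ℝ
  lam_vertex : ∀ i j, dlam i (x j) + c i = if i = j then 1 else 0

namespace Simplex

variable {n : ℕ} (B : Simplex n)

/-- The barycentric coordinate function `λ_i`. -/
def lam (i : Fin (n + 1)) (y : Fin n → ℝ) : ℝ := B.dlam i y + B.c i

/-- The barycentric monomial `λ^α = λ_0^{α_0} ⋯ λ_n^{α_n}`. -/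
def lamPow (α : Fin (n + 1) → ℕ) (y : Fin n → ℝ) : ℝ := ∏ i, (B.lam i y) ^ (α i)

/-- `dλ_σ = dλ_{σ 0} ∧ ⋯ ∧ dλ_{σ (k-1)}`. -/
def dlamWedge {k : ℕ} (σ : Fin k → Fin (n + 1)) : (Fin n → ℝ) [⋀^Fin k]→ₗ[ℝ] ℝ :=
  wedge fun j => B.dlam (σ j)

/-- The Whitney form `φ_σ = Σ_i (-1)^i λ_{σ i} dλ_{σ 0} ∧ ⋯ ∧ (omit dλ_{σ i}) ∧ ⋯ ∧ dλ_{σ k}`. -/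
def whitney {k : ℕ} (σ : Fin (k + 1) → Fin (n + 1)) (y : Fin n → ℝ) :
    (Fin n → ℝ) [⋀^Fin k]→ₗ[ℝ] ℝ :=
  ∑ i : Fin (k + 1), ((-1 : ℝ) ^ (i : ℕ) * B.lam (σ i) y) •
    wedge fun j : Fin k => B.dlam (σ (i.succAbove j))

/-- The tangent space `T_S = ∩_{i ∉ S} ker dλ_i` of the face `f_S`. -/
def tangent (S : Finset (Fin (n + 1))) : Set (Fin n → ℝ) :=
  {v | ∀ i ∉ S, B.dlam i v = 0}

/-- `ψ^{α,S}_i = dλ_i - (α_i / r) Σ_{j ∈ S} dλ_j`. -/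
def psi (α : Fin (n + 1) → ℕ) (r : ℕ) (S : Finset (Fin (n + 1))) (i : Fin (n + 1)) :
    (Fin n → ℝ) →ₗ[ℝ] ℝ :=
  B.dlam i - ((α i : ℝ) / (r : ℝ)) • ∑ j ∈ S, B.dlam j

/-- `ψ^{α,S}_σ = ψ^{α,S}_{σ 1} ∧ ⋯ ∧ ψ^{α,S}_{σ k}`. -/
def psiWedge {k : ℕ} (α : Fin (n + 1) → ℕ) (r : ℕ) (S : Finset (Fin (n + 1)))
    (σ : Fin k → Fin (n + 1)) : (Fin n → ℝ) [⋀^Fin k]→ₗ[ℝ] ℝ :=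
  wedge fun j => B.psi α r S (σ j)

/-- The list of direction vectors `x_j - x_l`, with `x_j - x_l` repeated `α j` times. -/
def dirList (α : Fin (n + 1) → ℕ) (l : Fin (n + 1)) : List (Fin n → ℝ) :=
  (List.finRange (n + 1)).flatMap fun j => List.replicate (α j) (B.x j - B.x l)

end Simplex

/-- The support `⟦α⟧` of a multi-index. -/
def suppF {n : ℕ} (α : Fin (n + 1) → ℕ) : Finset (Fin (n + 1)) :=
  Finset.univ.filter fun i => α i ≠ 0

/-- The range `⟦σ⟧` of an (increasing) map, as a finset. -/
def rangeF {n k : ℕ} (σ : Fin k → Fin (n + 1)) : Finset (Fin (n + 1)) :=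
  Finset.image σ Finset.univ

/-- `f : ℝⁿ → ℝ` is a polynomial function of (total) degree at most `r`. -/
def IsPolyDeg {n : ℕ} (r : ℕ) (f : (Fin n → ℝ) → ℝ) : Prop :=
  ∃ p : MvPolynomial (Fin n) ℝ, p.totalDegree ≤ r ∧ ∀ y, MvPolynomial.eval y p = f y

/-- `P_r`: the space of polynomial functions on `ℝⁿ` of degree at most `r`. -/
def Pscalar (n r : ℕ) : Submodule ℝ ((Fin n → ℝ) → ℝ) where
  carrier := {f | IsPolyDeg r f}
  add_mem' := by
    rintro f g ⟨p, hp, hpe⟩ ⟨q, hq, hqe⟩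
    exact ⟨p + q, le_trans (MvPolynomial.totalDegree_add p q) (max_le hp hq),
      fun y => by simp [hpe y, hqe y]⟩
  zero_mem' := ⟨0, by simp, fun y => by simp⟩
  smul_mem' := by
    rintro a f ⟨p, hp, hpe⟩
    exact ⟨a • p, le_trans (MvPolynomial.totalDegree_smul_le a p) hp,
      fun y => by simp [MvPolynomial.smul_eq_C_mul, hpe y]⟩

/-- `P_r Λ^k`: the space of polynomial differential `k`-forms of degree at most `r` on `ℝⁿ`. -/
def PLambda (n r k : ℕ) :
    Submodule ℝ ((Fin n → ℝ) → ((Fin n → ℝ) [⋀^Fin k]→ₗ[ℝ] ℝ)) where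
  carrier := {ω | ∀ v : Fin k → (Fin n → ℝ), IsPolyDeg r fun y => ω y v}
  add_mem' := by
    intro ω η hω hη v
    exact (Pscalar n r).add_mem (hω v) (hη v)
  zero_mem' := fun v => (Pscalar n r).zero_mem
  smul_mem' := by
    intro a ω hω v
    exact (Pscalar n r).smul_mem a (hω v)

/-- The Koszul operator `κ`, contracting a `(k+1)`-form field with the position vector. -/
def koszulHom (n k : ℕ) :
    ((Fin n → ℝ) → ((Fin n → ℝ) [⋀^Fin (k + 1)]→ₗ[ℝ] ℝ)) →ₗ[ℝ]
      ((Fin n → ℝ) → ((Fin n → ℝ) [⋀^Fin k]→ₗ[ℝ] ℝ)) where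
  toFun ω := fun y => (ω y).curryLeft y
  map_add' ω η := by funext y; simp
  map_smul' a ω := by funext y; simp

/-- `P⁻_r Λ^k = P_{r-1} Λ^k + κ (P_{r-1} Λ^{k+1})`. -/
def PminusLambda (n r k : ℕ) :
    Submodule ℝ ((Fin n → ℝ) → ((Fin n → ℝ) [⋀^Fin k]→ₗ[ℝ] ℝ)) :=
  PLambda n (r - 1) k ⊔ Submodule.map (koszulHom n k) (PLambda n (r - 1) (k + 1))

/-- `ω` has vanishing trace on the face `f_S`. -/
def VanishTrace {n k : ℕ} (B : Simplex n) (S : Finset (Fin (n + 1)))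
    (ω : (Fin n → ℝ) → ((Fin n → ℝ) [⋀^Fin k]→ₗ[ℝ] ℝ)) : Prop :=
  ∀ y : Fin n → ℝ, (∀ i ∉ S, B.lam i y = 0) →
    ∀ v : Fin k → (Fin n → ℝ), (∀ j, v j ∈ B.tangent S) → ω y v = 0

/-- Forms having vanishing trace on every face `f_S` with `|S| = n`
(the codimension-one faces). -/
def traceZeroSub {n : ℕ} (B : Simplex n) (k : ℕ) :
    Submodule ℝ ((Fin n → ℝ) → ((Fin n → ℝ) [⋀^Fin k]→ₗ[ℝ] ℝ)) where
  carrier := {ω | ∀ S : Finset (Fin (n + 1)), S.card = n → VanishTrace B S ω}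
  add_mem' := by
    intro ω η hω hη S hS y hy v hv
    simp only [Pi.add_apply, AlternatingMap.add_apply, hω S hS y hy v hv,
      hη S hS y hy v hv, add_zero]
  zero_mem' := by intro S hS y hy v hv; simp
  smul_mem' := by
    intro a ω hω S hS y hy v hv
    simp only [Pi.smul_apply, AlternatingMap.smul_apply, hω S hS y hy v hv, smul_zero]

/-- `P̊_r Λ^k`: polynomial forms with vanishing trace on the boundary. -/
def PLambdaZero {n : ℕ} (B : Simplex n) (r k : ℕ) :
    Submodule ℝ ((Fin n → ℝ) → ((Fin n → ℝ) [⋀^Fin k]→ₗ[ℝ] ℝ)) :=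
  PLambda n r k ⊓ traceZeroSub B k

/-- `P̊⁻_r Λ^k`: forms in `P⁻_r Λ^k` with vanishing trace on the boundary. -/
def PminusLambdaZero {n : ℕ} (B : Simplex n) (r k : ℕ) :
    Submodule ℝ ((Fin n → ℝ) → ((Fin n → ℝ) [⋀^Fin k]→ₗ[ℝ] ℝ)) :=
  PminusLambda n r k ⊓ traceZeroSub B k

/-- `f` vanishes to order `r` at `y`: all partial derivatives of order `< r` vanish at `y`. -/
def VanishOrder {n : ℕ} (r : ℕ) (f : (Fin n → ℝ) → ℝ) (y : Fin n → ℝ) : Prop :=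
  ∀ m : ℕ, m < r → iteratedFDeriv ℝ m f y = 0

/-- Iterated directional derivatives along a list of directions. -/
def dirDerivList {n : ℕ} : List (Fin n → ℝ) → ((Fin n → ℝ) → ℝ) → ((Fin n → ℝ) → ℝ)
  | [], f => f
  | t :: ts, f => dirDerivList ts fun y => fderiv ℝ f y t

/-!
Test the forms on the edge vectors `x_j - x_m`, `j ∈ ⟦τ⟧`, where `τ` is the face of `σ`
opposite to `x_m`. At the vertex `x_m` only the term of `φ_σ` carrying `λ_m` survives, so
`φ_σ(x_m) = ± dλ_τ`, and these are dual to the edge vectors. Hence the matrix of affine polynomials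
`φ_σ(·)(x_{τ'} - x_m)` specializes at `x_m` to a diagonal matrix of signs: its determinant is a
nonzero polynomial, so no nonzero polynomial vector lies in its left kernel.
-/

theorem Matrix.det_of_ite_eq_of_strictMono {R α : Type*} [CommRing R] [LinearOrder α] {k : ℕ}
    {a b : Fin k → α} (ha : StrictMono a) (hb : StrictMono b) :
    (Matrix.of fun j i => if a i = b j then (1 : R) else 0).det = if a = b then 1 else 0 := by
  by_cases hab : a = b
  · subst hab
    have hone : (Matrix.of fun j i => if a i = a j then (1 : R) else 0) = 1 := by
      ext j i
      simp [Matrix.one_apply, ha.injective.eq_iff, eq_comm]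
    rw [hone, Matrix.det_one, if_pos rfl]
  · rw [if_neg hab]
    obtain ⟨j, hj⟩ : ∃ j, b j ∉ Set.range a := by
      by_contra! hall
      have hrange := Set.eq_of_subset_of_ncard_le (Set.range_subset_iff.mpr hall)
        (by rw [Set.ncard_range_of_injective ha.injective,
          Set.ncard_range_of_injective hb.injective]) (Set.finite_range a)
      exact hab ((hb.range_inj ha).mp hrange).symm
    exact Matrix.det_eq_zero_of_row_eq_zero j fun i => if_neg fun h => hj ⟨i, h⟩

section OfLinearMap

variable {R ι : Type*} [CommRing R] [Fintype ι] [DecidableEq ι]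

def MvPolynomial.ofLinearMap (f : (ι → R) →ₗ[R] R) : MvPolynomial ι R :=
  ∑ j, C (f (Pi.single j 1)) * X j

theorem MvPolynomial.eval_ofLinearMap (f : (ι → R) →ₗ[R] R) (y : ι → R) :
    eval y (ofLinearMap f) = f y := by
  simp only [ofLinearMap, map_sum, map_mul, eval_C, eval_X]
  rw [f.pi_apply_eq_sum_univ y]
  refine Finset.sum_congr rfl fun j _ => ?_
  rw [smul_eq_mul, mul_comm]
  congr 2
  ext t
  simp [Pi.single_apply, eq_comm]

end OfLinearMap

theorem AlternatingMap.finsetSum_apply {R M N ι κ : Type*} [CommSemiring R] [AddCommMonoid M]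
    [Module R M] [AddCommMonoid N] [Module R N] (s : Finset κ) (f : κ → M [⋀^ι]→ₗ[R] N)
    (v : ι → M) : (∑ i ∈ s, f i) v = ∑ i ∈ s, f i v := by
  simpa only [AlternatingMap.toMultilinearMapLM_apply, sum_apply,
    AlternatingMap.coe_multilinearMap] using
    congrArg (fun g => g v) (map_sum (AlternatingMap.toMultilinearMapLM (S := R)) f s)

theorem wedge_apply {n k : ℕ} (f : Fin k → (Fin n → ℝ) →ₗ[ℝ] ℝ) (v : Fin k → Fin n → ℝ) :
    wedge f v = (Matrix.of fun j i => f i (v j)).det :=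
  rfl

namespace Simplex

variable {n k : ℕ} (B : Simplex n)

theorem lam_apply_vertex (i j : Fin (n + 1)) : B.lam i (B.x j) = if i = j then 1 else 0 :=
  B.lam_vertex i j

theorem dlam_vertex_sub_vertex {a m : Fin (n + 1)} (ha : a ≠ m) (b : Fin (n + 1)) :
    B.dlam a (B.x b - B.x m) = if a = b then 1 else 0 := by
  have hb := B.lam_vertex a b
  have hm := B.lam_vertex a m
  rw [if_neg ha] at hm
  rw [map_sub]
  linarith

theorem whitney_apply (σ : Fin (k + 1) → Fin (n + 1)) (y : Fin n → ℝ)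
    (v : Fin k → Fin n → ℝ) :
    B.whitney σ y v = ∑ i : Fin (k + 1), (-1) ^ (i : ℕ) * B.lam (σ i) y *
      wedge (fun j => B.dlam (σ (i.succAbove j))) v := by
  simp only [whitney, AlternatingMap.finsetSum_apply, AlternatingMap.smul_apply, smul_eq_mul]

def lamPoly (i : Fin (n + 1)) : MvPolynomial (Fin n) ℝ :=
  MvPolynomial.ofLinearMap (B.dlam i) + MvPolynomial.C (B.c i)

theorem eval_lamPoly (i : Fin (n + 1)) (y : Fin n → ℝ) :
    MvPolynomial.eval y (B.lamPoly i) = B.lam i y := by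
  simp [lamPoly, lam, MvPolynomial.eval_ofLinearMap]

def whitneyPoly (σ : Fin (k + 1) → Fin (n + 1)) (v : Fin k → Fin n → ℝ) :
    MvPolynomial (Fin n) ℝ :=
  ∑ i : Fin (k + 1),
    MvPolynomial.C ((-1) ^ (i : ℕ) * wedge (fun j => B.dlam (σ (i.succAbove j))) v) *
      B.lamPoly (σ i)

theorem eval_whitneyPoly (σ : Fin (k + 1) → Fin (n + 1)) (v : Fin k → Fin n → ℝ)
    (y : Fin n → ℝ) : MvPolynomial.eval y (B.whitneyPoly σ v) = B.whitney σ y v := by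
  rw [whitneyPoly, whitney_apply, map_sum]
  simp only [map_mul, MvPolynomial.eval_C, eval_lamPoly]
  exact Finset.sum_congr rfl fun i _ => by ring

end Simplex

/-- The `k`-subsimplices of `T` containing the vertex `x_m`. -/
abbrev VertexStar (n k : ℕ) (m : Fin (n + 1)) : Type :=
  {σ : Fin (k + 1) → Fin (n + 1) // StrictMono σ ∧ m ∈ Set.range σ}

namespace VertexStar

variable {n k : ℕ} {m : Fin (n + 1)} (σ τ : VertexStar n k m)

def pos : Fin (k + 1) := σ.2.2.choose

theorem apply_pos : σ.1 σ.pos = m := σ.2.2.choose_spec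

def oppFace : Fin k → Fin (n + 1) := σ.1 ∘ σ.pos.succAbove

theorem oppFace_strictMono : StrictMono σ.oppFace :=
  σ.2.1.comp (Fin.strictMono_succAbove _)

theorem apply_eq_iff {i : Fin (k + 1)} : σ.1 i = m ↔ i = σ.pos :=
  ⟨fun h => σ.2.1.injective (h.trans σ.apply_pos.symm), fun h => h ▸ σ.apply_pos⟩

theorem oppFace_ne (j : Fin k) : σ.oppFace j ≠ m :=
  fun h => Fin.succAbove_ne _ j (σ.apply_eq_iff.mp h)

theorem range_eq_insert_range_oppFace : Set.range σ.1 = insert m (Set.range σ.oppFace) := by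
  have h := Set.image_insert_eq (f := σ.1) (a := σ.pos) (s := {σ.pos}ᶜ)
  rw [Set.insert_eq, Set.union_compl_self, Set.image_univ, σ.apply_pos] at h
  rw [oppFace, Set.range_comp, Fin.range_succAbove, h]

theorem oppFace_injective :
    Function.Injective (oppFace : VertexStar n k m → Fin k → Fin (n + 1)) :=
  fun σ τ h => Subtype.ext <| (σ.2.1.range_inj τ.2.1).mp <| by
    rw [range_eq_insert_range_oppFace, range_eq_insert_range_oppFace, h]

end VertexStar

namespace Simplex

variable {n k : ℕ} {m : Fin (n + 1)} (B : Simplex n)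

def testVec (σ : VertexStar n k m) : Fin k → Fin n → ℝ :=
  fun j => B.x (σ.oppFace j) - B.x m

theorem wedge_dlam_oppFace_testVec (σ τ : VertexStar n k m) :
    wedge (fun j => B.dlam (σ.oppFace j)) (B.testVec τ) = if σ = τ then 1 else 0 := by
  have hentry : ∀ j i, B.dlam (σ.oppFace i) (B.testVec τ j) =
      if σ.oppFace i = τ.oppFace j then 1 else 0 := fun j i =>
    B.dlam_vertex_sub_vertex (σ.oppFace_ne i) _
  simp only [wedge_apply, hentry]
  rw [Matrix.det_of_ite_eq_of_strictMono σ.oppFace_strictMono τ.oppFace_strictMono]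
  simp only [VertexStar.oppFace_injective.eq_iff]

theorem whitney_vertex_apply (σ : VertexStar n k m) (v : Fin k → Fin n → ℝ) :
    B.whitney σ.1 (B.x m) v = (-1) ^ (σ.pos : ℕ) * wedge (fun j => B.dlam (σ.oppFace j)) v := by
  rw [whitney_apply, Finset.sum_eq_single σ.pos]
  · rw [σ.apply_pos, lam_apply_vertex, if_pos rfl, mul_one]
    rfl
  · intro i _ hi
    rw [lam_apply_vertex, if_neg (mt σ.apply_eq_iff.mp hi), mul_zero, zero_mul]
  · simp

theorem whitney_vertex_testVec (σ τ : VertexStar n k m) :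
    B.whitney σ.1 (B.x m) (B.testVec τ) = if σ = τ then (-1) ^ (σ.pos : ℕ) else 0 := by
  rw [whitney_vertex_apply, wedge_dlam_oppFace_testVec]
  split_ifs <;> simp

open scoped Classical in
theorem eq_zero_of_sum_smul_whitney_eq_zero (q : VertexStar n k m → MvPolynomial (Fin n) ℝ)
    (h : ∀ y, ∑ σ : VertexStar n k m, MvPolynomial.eval y (q σ) • B.whitney σ.1 y = 0) :
    q = 0 := by
  let A : Matrix (VertexStar n k m) (VertexStar n k m) (MvPolynomial (Fin n) ℝ) :=
    Matrix.of fun σ τ => B.whitneyPoly σ.1 (B.testVec τ)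
  have hA_vertex : A.map (MvPolynomial.eval (B.x m)) =
      Matrix.diagonal fun σ => (-1) ^ (σ.pos : ℕ) := by
    ext σ τ
    simp [A, eval_whitneyPoly, whitney_vertex_testVec, Matrix.diagonal_apply]
  have hdet : A.det ≠ 0 := fun h0 => by
    have := congrArg (MvPolynomial.eval (B.x m)) h0
    rw [RingHom.map_det, RingHom.mapMatrix_apply, hA_vertex, Matrix.det_diagonal] at this
    exact Finset.prod_ne_zero_iff.mpr
      (fun σ _ => pow_ne_zero _ (neg_ne_zero.mpr one_ne_zero)) this
  refine Matrix.eq_zero_of_vecMul_eq_zero hdet (funext fun τ => MvPolynomial.funext fun y => ?_)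
  simpa [Matrix.vecMul, dotProduct, A, eval_whitneyPoly, AlternatingMap.finsetSum_apply] using
    congrArg (fun ω => ω (B.testVec τ)) (h y)

end Simplex

open scoped Classical in
theorem stmt4_general {n k : ℕ} (B : Simplex n) (m : Fin (n + 1))
    (p : (Fin (k + 1) → Fin (n + 1)) → MvPolynomial (Fin n) ℝ)
    (h : ∀ y : Fin n → ℝ,
      (∑ σ ∈ Finset.univ.filter (fun σ : Fin (k + 1) → Fin (n + 1) =>
          StrictMono σ ∧ m ∈ Set.range σ),
        MvPolynomial.eval y (p σ) • B.whitney σ y) = 0) :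
    ∀ σ : Fin (k + 1) → Fin (n + 1), StrictMono σ → m ∈ Set.range σ → p σ = 0 := by
  intro σ hσ hm
  have hstar := B.eq_zero_of_sum_smul_whitney_eq_zero (fun τ : VertexStar n k m => p τ.1)
    fun y => (Finset.sum_subtype _ Finset.mem_filter_univ _).symm.trans (h y)
  exact congrFun hstar ⟨σ, hσ, hm⟩

open scoped Classical in
/-- the Whitney forms corresponding to the `k`-subsimplices containing the vertex
`x_m` are linearly independent over the ring of polynomials. -/
theorem stmt4 {n k : ℕ} (hn : 1 ≤ n) (hk : k ≤ n) (B : Simplex n) (m : Fin (n + 1))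
    (p : (Fin (k + 1) → Fin (n + 1)) → MvPolynomial (Fin n) ℝ)
    (h : ∀ y : Fin n → ℝ,
      (∑ σ ∈ Finset.univ.filter (fun σ : Fin (k + 1) → Fin (n + 1) =>
          StrictMono σ ∧ m ∈ Set.range σ),
        MvPolynomial.eval y (p σ) • B.whitney σ y) = 0) :
    ∀ σ : Fin (k + 1) → Fin (n + 1), StrictMono σ → m ∈ Set.range σ → p σ = 0 :=
  stmt4_general B m p h
end
end

section
/- Let r ≥ 1 and 0 ≤ k ≤ n. The set {λ^α dλ_σ : α ∈ ℕ^{n+1}, |α| = r, σ : {1,…,k} → {0,…,n} increasing, ⟦α,σ⟧ = {0,…,n}} spans P̊_rΛ^k, and the family {λ^α dλ_σ : α ∈ ℕ^{n+1}, |α| = r, σ : {1,…,k} → {0,…,n} increasing, ⟦α,σ⟧ = {0,…,n}, α_i = 0 for every i < min({0,…,n} ∖ ⟦σ⟧)} is a basis of P̊_rΛ^k. -/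
open scoped BigOperators

noncomputable section

/-!
Two dualities carry the argument. For scalars: the Bernstein monomials `λ^α`, `|α| = r`, span
the polynomials of degree `≤ r` (each coordinate is `∑_i (x_i)_j λ_i`, and degrees are padded
with `∑_i λ_i = 1`), and those with `⟦α⟧ ⊆ S` stay independent on the face `f_S`, because a
homogeneous polynomial vanishing on `∑_{i ∈ S} t_i = 1` vanishes. For forms: at a vertex `x_l`,
the `dλ_τ` with `τ` increasing and avoiding `l` are dual to the edge tuples `(x_{τ s} - x_l)_s`.

Write `ω = ∑_α λ^α η_α` with constant forms `η_α`. The trace condition on the facet opposite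
`x_m` makes `η_α` vanish on that facet whenever `α_m = 0`. Expanding `η_α` at the lowest vertex of
`⟦α⟧` then leaves only the `λ^α dλ_τ` with `⟦α, τ⟧` full and that vertex missing from `⟦τ⟧`,
which are exactly the basis forms. They are independent because the `λ^α` are, and for fixed `α`
the `dλ_τ` involved all avoid the same vertex.
-/

namespace MvPolynomial

variable {σ K : Type*}

theorem IsHomogeneous.eval_smul [CommSemiring K] {P : MvPolynomial σ K} {r : ℕ}
    (hP : P.IsHomogeneous r) (s : K) (t : σ → K) : eval (s • t) P = s ^ r * eval t P := by
  rw [eval_eq, eval_eq, Finset.mul_sum]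
  refine Finset.sum_congr rfl fun d hd => ?_
  have hdeg : ∑ i ∈ d.support, d i = r := by
    simpa [Finsupp.weight_apply, Finsupp.sum] using hP (mem_support_iff.mp hd)
  simp only [Pi.smul_apply, smul_eq_mul, mul_pow, Finset.prod_mul_distrib,
    Finset.prod_pow_eq_pow_sum, hdeg]
  ring

/-- Multiplying by `∑_{i ∈ S} X_i` turns vanishing on the hyperplane `∑_{i ∈ S} t_i = 1` into
vanishing everywhere, by homogeneity. -/
theorem IsHomogeneous.eq_zero_of_eval_eq_zero [Field K] [Infinite K] {P : MvPolynomial σ K}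
    {r : ℕ} (hP : P.IsHomogeneous r) {S : Finset σ} (hS : S.Nonempty)
    (h : ∀ t : σ → K, ∑ i ∈ S, t i = 1 → eval t P = 0) : P = 0 := by
  classical
  have hprod : (∑ i ∈ S, X i) * P = 0 := by
    refine MvPolynomial.funext fun t => ?_
    simp only [map_mul, map_sum, eval_X, map_zero]
    by_cases hs : ∑ i ∈ S, t i = 0
    · rw [hs, zero_mul]
    · have hunit : ∑ i ∈ S, ((∑ i ∈ S, t i)⁻¹ • t) i = 1 := by
        simp only [Pi.smul_apply, smul_eq_mul, ← Finset.mul_sum, inv_mul_cancel₀ hs]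
      have hscale := hP.eval_smul (∑ i ∈ S, t i) ((∑ i ∈ S, t i)⁻¹ • t)
      rw [smul_smul, mul_inv_cancel₀ hs, one_smul, h _ hunit, mul_zero] at hscale
      rw [hscale, mul_zero]
  obtain ⟨i₀, hi₀⟩ := hS
  have hsum : (∑ i ∈ S, X i : MvPolynomial σ K) ≠ 0 := fun h0 => by
    simpa [Pi.single_apply, hi₀] using congrArg (eval (Pi.single i₀ 1)) h0
  exact (mul_eq_zero.mp hprod).resolve_left hsum

end MvPolynomial

/-- Pair with a linear functional: independence of `f` separates the fibres of `π`. -/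
theorem linearIndepOn_smul_of_fibers {K ι κ X M : Type*} [Field K] [AddCommGroup M] [Module K M]
    {f : ι → X → K} {π : κ → ι} {ω : κ → M} {s : Set κ} (hf : LinearIndepOn K f (π '' s))
    (hω : ∀ i, LinearIndepOn K ω (s ∩ π ⁻¹' {i})) :
    LinearIndepOn K (fun q x => f (π q) x • ω q) s := by
  classical
  rw [linearIndepOn_iff']
  intro t g hts hsum q hq
  have hfiber : ∀ i ∈ t.image π, ∑ p ∈ t.filter (π · = i), g p • ω p = 0 := by
    intro i hi
    refine (Module.forall_dual_apply_eq_zero_iff K _).mp fun φ => ?_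
    have hφ : ∑ j ∈ t.image π, (∑ p ∈ t.filter (π · = j), g p * φ (ω p)) • f j = 0 := by
      funext x
      have := congrArg (fun F => φ (F x)) hsum
      simp only [Finset.sum_apply, Pi.smul_apply, map_sum, map_smul, smul_eq_mul,
        Pi.zero_apply, map_zero] at this
      simp only [Finset.sum_apply, Pi.smul_apply, smul_eq_mul, Finset.sum_mul, Pi.zero_apply]
      calc ∑ j ∈ t.image π, ∑ p ∈ t.filter (π · = j), g p * φ (ω p) * f j x
          = ∑ j ∈ t.image π, ∑ p ∈ t.filter (π · = j), g p * (f (π p) x * φ (ω p)) :=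
            Finset.sum_congr rfl fun j _ => Finset.sum_congr rfl fun p hp => by
              rw [(Finset.mem_filter.mp hp).2]; ring
        _ = 0 := by
          rw [Finset.sum_fiberwise_of_maps_to fun p hp => Finset.mem_image_of_mem π hp]
          exact this
    have := linearIndepOn_iff'.mp hf (t.image π) _
      (by simpa using Set.image_mono hts) hφ i hi
    simpa [map_sum] using this
  refine linearIndepOn_iff'.mp (hω (π q)) (t.filter (π · = π q)) g
    (fun p hp => ?_) (hfiber _ (Finset.mem_image_of_mem π hq)) q (by simp [hq])
  simp only [Finset.coe_filter, Set.mem_ofPred_eq] at hp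
  exact ⟨hts hp.1, hp.2⟩

theorem Module.Basis.ext_alternating_of_strictMono {ι R M N : Type*} [LinearOrder ι] [CommRing R]
    [AddCommGroup M] [Module R M] [AddCommGroup N] [Module R N] (b : Module.Basis ι R M) {k : ℕ}
    {f g : M [⋀^Fin k]→ₗ[R] N} (h : ∀ τ : Fin k → ι, StrictMono τ → f (b ∘ τ) = g (b ∘ τ)) :
    f = g := by
  refine b.ext_alternating fun v hv => ?_
  set e := Tuple.sort v
  have hsorted : StrictMono (v ∘ e) :=
    (Tuple.monotone_sort v).strictMono_of_injective (hv.comp e.injective)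
  have := h _ hsorted
  rw [← Function.comp_assoc, AlternatingMap.map_perm, AlternatingMap.map_perm] at this
  simpa [Function.comp_def] using congrArg (Equiv.Perm.sign e • ·) this

instance {R M N ι : Type*} [Semiring R] [AddCommMonoid M] [Module R M] [AddCommMonoid N]
    [Module R N] : IsZeroApply (M [⋀^ι]→ₗ[R] N) (ι → M) N :=
  ⟨fun _ => rfl⟩

instance {R M N ι : Type*} [Semiring R] [AddCommMonoid M] [Module R M] [AddCommMonoid N]
    [Module R N] : IsAddApply (M [⋀^ι]→ₗ[R] N) (ι → M) N :=
  ⟨fun _ _ _ => rfl⟩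

theorem StrictMono.eq_of_forall_mem_range {k m : ℕ} {τ ρ : Fin k → Fin m} (hτ : StrictMono τ)
    (hρ : StrictMono ρ) (h : ∀ t, τ t ∈ Set.range ρ) : τ = ρ := by
  classical
  have himage : Finset.univ.image τ = Finset.univ.image ρ :=
    Finset.eq_of_subset_of_card_le (by simpa [Finset.subset_iff] using h) (by
      rw [Finset.card_image_of_injective _ hρ.injective,
        Finset.card_image_of_injective _ hτ.injective])
  exact (hτ.range_inj hρ).mp (by simpa using congrArg ((↑) : Finset (Fin m) → Set (Fin m)) himage)

open Classical in
def strictMonoAvoiding (n k : ℕ) (l : Fin (n + 1)) : Finset (Fin k → Fin (n + 1)) :=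
  Finset.univ.filter fun τ => StrictMono τ ∧ ∀ t, τ t ≠ l

theorem mem_strictMonoAvoiding {n k : ℕ} {l : Fin (n + 1)} {τ : Fin k → Fin (n + 1)} :
    τ ∈ strictMonoAvoiding n k l ↔ StrictMono τ ∧ ∀ t, τ t ≠ l := by
  simp [strictMonoAvoiding]

theorem mem_suppF {n : ℕ} {α : Fin (n + 1) → ℕ} {i : Fin (n + 1)} : i ∈ suppF α ↔ α i ≠ 0 := by
  simp [suppF]

theorem mem_rangeF {n k : ℕ} {σ : Fin k → Fin (n + 1)} {j : Fin (n + 1)} :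
    j ∈ rangeF σ ↔ ∃ t, σ t = j := by
  simp [rangeF]

theorem suppF_nonempty {n : ℕ} {α : Fin (n + 1) → ℕ} (hα : ∑ i, α i ≠ 0) : (suppF α).Nonempty := by
  by_contra hempty
  refine hα (Finset.sum_eq_zero fun i _ => ?_)
  by_contra hi
  exact hempty ⟨i, mem_suppF.mpr hi⟩

/-- The last condition says `α_i = 0` for every `i < min ({0, …, n} \ ⟦σ⟧)`. -/
def basisIndex (n k r : ℕ) : Set ((Fin (n + 1) → ℕ) × (Fin k → Fin (n + 1))) :=
  {q | (∑ i, q.1 i) = r ∧ StrictMono q.2 ∧ suppF q.1 ∪ rangeF q.2 = Finset.univ ∧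
    ∀ i, (∀ j, j ≤ i → j ∈ rangeF q.2) → q.1 i = 0}

theorem mem_basisIndex_iff_of_isLeast {n k r : ℕ} {α : Fin (n + 1) → ℕ} {σ : Fin k → Fin (n + 1)}
    {m : Fin (n + 1)} (hm : IsLeast (suppF α : Set (Fin (n + 1))) m) :
    (α, σ) ∈ basisIndex n k r ↔
      (∑ i, α i) = r ∧ StrictMono σ ∧ suppF α ∪ rangeF σ = Finset.univ ∧ ∀ t, σ t ≠ m := by
  simp only [basisIndex, Set.mem_ofPred_eq]
  refine and_congr_right' (and_congr_right' (and_congr_right fun hfull => ⟨fun hlow t hσt => ?_,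
    fun hm' i hbelow => ?_⟩))
  · refine mem_suppF.mp hm.1 (hlow m fun j hj => ?_)
    rcases hj.lt_or_eq with hj | rfl
    · have hj' : j ∈ suppF α ∪ rangeF σ := hfull ▸ Finset.mem_univ j
      exact (Finset.mem_union.mp hj').resolve_left fun hjα => (hm.2 hjα).not_gt hj
    · exact mem_rangeF.mpr ⟨t, hσt⟩
  · by_contra hi
    obtain ⟨t, ht⟩ := mem_rangeF.mp (hbelow m (hm.2 (mem_suppF.mpr hi)))
    exact hm' t ht

namespace Simplex

variable {n : ℕ} (B : Simplex n)

theorem dlam_vertex (i j : Fin (n + 1)) : B.dlam i (B.x j) = (if i = j then 1 else 0) - B.c i := by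
  linarith [B.lam_vertex i j]

theorem dlam_vertex_sub (i j l : Fin (n + 1)) :
    B.dlam i (B.x j - B.x l) = (if i = j then 1 else 0) - if i = l then 1 else 0 := by
  rw [map_sub, dlam_vertex, dlam_vertex]; ring

def vertexBasis (l : Fin (n + 1)) : Module.Basis {j // j ≠ l} ℝ (Fin n → ℝ) :=
  basisOfLinearIndependentOfCardEqFinrank' _
    (by simpa [vsub_eq_sub] using
      (affineIndependent_iff_linearIndependent_vsub ℝ B.x l).mp B.affineIndep)
    (by simp [Fintype.card_subtype_compl])

@[simp]
theorem vertexBasis_apply (l : Fin (n + 1)) (j : {j // j ≠ l}) :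
    B.vertexBasis l j = B.x j - B.x l := by
  simp [vertexBasis]

theorem vertexBasis_coord (l : Fin (n + 1)) (j : {j // j ≠ l}) :
    (B.vertexBasis l).coord j = B.dlam j := by
  refine (B.vertexBasis l).ext fun i => ?_
  rw [Module.Basis.coord_apply, Module.Basis.repr_self, vertexBasis_apply, dlam_vertex_sub]
  simp [Finsupp.single_apply, Ne.symm j.2, Subtype.ext_iff, eq_comm]

theorem eq_zero_of_forall_dlam_eq_zero {u : Fin n → ℝ} (h : ∀ i, B.dlam i u = 0) : u = 0 :=
  (B.vertexBasis 0).forall_coord_eq_zero_iff.mp fun j => by rw [vertexBasis_coord]; exact h j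

theorem sum_dlam : ∑ i, B.dlam i = 0 :=
  (B.vertexBasis 0).ext fun j => by
    simp [dlam_vertex_sub, Finset.sum_sub_distrib]

theorem sum_c : ∑ i, B.c i = 1 := by
  have h := congrArg (fun L : (Fin n → ℝ) →ₗ[ℝ] ℝ => L (B.x 0)) B.sum_dlam
  simp only [LinearMap.sum_apply, dlam_vertex, LinearMap.zero_apply,
    Finset.sum_sub_distrib, Finset.sum_ite_eq', Finset.mem_univ, if_true] at h
  linarith

theorem sum_lam (y : Fin n → ℝ) : ∑ i, B.lam i y = 1 := by
  have h := congrArg (fun L : (Fin n → ℝ) →ₗ[ℝ] ℝ => L y) B.sum_dlam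
  simp only [LinearMap.sum_apply, LinearMap.zero_apply] at h
  simp [lam, Finset.sum_add_distrib, h, sum_c]

theorem lam_affineCombination {t : Fin (n + 1) → ℝ} (ht : ∑ i, t i = 1) (j : Fin (n + 1)) :
    B.lam j (∑ i, t i • B.x i) = t j := by
  simp [lam, dlam_vertex, mul_sub, Finset.sum_sub_distrib, ← Finset.sum_mul, ht]

theorem sum_lam_smul_vertex (y : Fin n → ℝ) : ∑ i, B.lam i y • B.x i = y := by
  refine sub_eq_zero.mp (B.eq_zero_of_forall_dlam_eq_zero fun j => ?_)
  have h := B.lam_affineCombination (B.sum_lam y) j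
  simp only [lam] at h ⊢
  rw [map_sub]
  linarith

theorem isPolyDeg_lam (i : Fin (n + 1)) : IsPolyDeg 1 (B.lam i) := by
  classical
  refine ⟨∑ j, MvPolynomial.C (B.dlam i fun k => if j = k then 1 else 0) * MvPolynomial.X j +
    MvPolynomial.C (B.c i), ?_, fun y => ?_⟩
  · refine (MvPolynomial.totalDegree_add _ _).trans (max_le ?_ (by simp))
    refine (MvPolynomial.totalDegree_finsetSum _ _).trans (Finset.sup_le fun j _ => ?_)
    exact (MvPolynomial.totalDegree_mul _ _).trans (by simp)
  · conv_rhs => rw [lam, LinearMap.pi_apply_eq_sum_univ (B.dlam i) y]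
    simp [mul_comm]

theorem isPolyDeg_lamPow (α : Fin (n + 1) → ℕ) : IsPolyDeg (∑ i, α i) (B.lamPow α) := by
  choose p hp hpe using B.isPolyDeg_lam
  refine ⟨∏ i, p i ^ α i, ?_, fun y => by simp [lamPow, hpe]⟩
  refine (MvPolynomial.totalDegree_finsetProd _ _).trans (Finset.sum_le_sum fun i _ => ?_)
  exact (MvPolynomial.totalDegree_pow _ _).trans (by simpa using Nat.mul_le_mul_left (α i) (hp i))

theorem lamPow_add (α β : Fin (n + 1) → ℕ) : B.lamPow (α + β) = B.lamPow α * B.lamPow β := by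
  funext y
  simp [lamPow, pow_add, Finset.prod_mul_distrib]

def bernsteinSpan (d : ℕ) : Submodule ℝ ((Fin n → ℝ) → ℝ) :=
  Submodule.span ℝ (B.lamPow '' ↑(Finset.Nat.antidiagonalTuple (n + 1) d))

instance : SetLike.GradedMonoid B.bernsteinSpan where
  one_mem := Submodule.subset_span ⟨0, by simp [Finset.Nat.mem_antidiagonalTuple],
    by funext y; simp [lamPow]⟩
  mul_mem := fun a b f g hf hg => by
    have hfg := Submodule.mul_mem_mul hf hg
    rw [bernsteinSpan, bernsteinSpan, Submodule.span_mul_span] at hfg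
    refine Submodule.span_mono ?_ hfg
    rintro _ ⟨_, ⟨α, hα, rfl⟩, _, ⟨β, hβ, rfl⟩, rfl⟩
    simp only [Finset.mem_coe, Finset.Nat.mem_antidiagonalTuple] at hα hβ
    exact ⟨α + β, by simp [Finset.Nat.mem_antidiagonalTuple, Finset.sum_add_distrib, hα, hβ],
      B.lamPow_add α β⟩

theorem lam_mem_bernsteinSpan (i : Fin (n + 1)) : B.lam i ∈ B.bernsteinSpan 1 := by
  refine Submodule.subset_span ⟨Pi.single i 1, by simp [Finset.Nat.mem_antidiagonalTuple], ?_⟩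
  funext y
  simp [lamPow, Pi.single_apply, pow_ite]

theorem bernsteinSpan_le_succ (d : ℕ) : B.bernsteinSpan d ≤ B.bernsteinSpan (d + 1) := by
  intro f hf
  have hone : ∑ i, B.lam i = 1 := by funext y; simp [sum_lam]
  have := SetLike.mul_mem_graded hf
    (Submodule.sum_mem _ (t := Finset.univ) fun i _ => B.lam_mem_bernsteinSpan i)
  rwa [hone, mul_one] at this

theorem bernsteinSpan_mono : Monotone B.bernsteinSpan :=
  monotone_nat_of_le_succ B.bernsteinSpan_le_succ

theorem coord_mem_bernsteinSpan (j : Fin n) : (fun y : Fin n → ℝ => y j) ∈ B.bernsteinSpan 1 := by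
  have hcoord : (fun y : Fin n → ℝ => y j) = ∑ i, B.x i j • B.lam i := by
    funext y
    conv_lhs => rw [← B.sum_lam_smul_vertex y]
    simp [mul_comm]
  rw [hcoord]
  exact Submodule.sum_mem _ fun i _ => Submodule.smul_mem _ _ (B.lam_mem_bernsteinSpan i)

theorem mem_bernsteinSpan {r : ℕ} {f : (Fin n → ℝ) → ℝ} (hf : IsPolyDeg r f) :
    f ∈ B.bernsteinSpan r := by
  obtain ⟨p, hp, hpe⟩ := hf
  have hexpand : f = ∑ d ∈ p.support, p.coeff d • ∏ i, (fun y : Fin n → ℝ => y i) ^ d i := by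
    funext y
    simp [← hpe y, MvPolynomial.eval_eq']
  rw [hexpand]
  refine Submodule.sum_mem _ fun d hd => Submodule.smul_mem _ _ ?_
  have hdeg : ∑ i, d i ≤ r := by
    have := MvPolynomial.le_totalDegree hd
    rw [Finsupp.sum_fintype _ _ fun _ => rfl] at this
    omega
  refine B.bernsteinSpan_mono hdeg ?_
  simpa using SetLike.prod_pow_mem_graded B.bernsteinSpan (fun _ => 1) _ d
    fun i _ => B.coord_mem_bernsteinSpan i

theorem coeff_eq_zero_of_sum_lamPow_eq_zero_on_face {r : ℕ} {S : Finset (Fin (n + 1))}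
    (hS : S.Nonempty) {s : Finset (Fin (n + 1) → ℕ)} (hs : ∀ β ∈ s, ∑ i, β i = r)
    (c : (Fin (n + 1) → ℕ) → ℝ)
    (h : ∀ y, (∀ i ∉ S, B.lam i y = 0) → ∑ β ∈ s, c β * B.lamPow β y = 0)
    {α : Fin (n + 1) → ℕ} (hα : α ∈ s) (hαS : ∀ i ∉ S, α i = 0) : c α = 0 := by
  classical
  let toF : (Fin (n + 1) → ℕ) ≃ (Fin (n + 1) →₀ ℕ) := Finsupp.equivFunOnFinite.symm
  -- `Q(t) = ∑_{⟦β⟧ ⊆ S} c_β t^β` equals the given combination at the point of `f_S` whose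
  -- barycentric coordinates are `t` restricted to `S`.
  let Q := ∑ β ∈ s.filter (fun β => ∀ i ∉ S, β i = 0), MvPolynomial.monomial (toF β) (c β)
  have hQ : Q.IsHomogeneous r := MvPolynomial.IsHomogeneous.sum _ _ _ fun β hβ =>
    MvPolynomial.isHomogeneous_monomial _ (by
      simpa [toF, Finsupp.degree_eq_sum] using hs β (Finset.mem_filter.mp hβ).1)
  have hQ0 : Q = 0 := by
    refine hQ.eq_zero_of_eval_eq_zero hS fun t ht => ?_
    let t' : Fin (n + 1) → ℝ := fun i => if i ∈ S then t i else 0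
    have ht' : ∑ i, t' i = 1 := by simpa [t', Finset.sum_ite_mem] using ht
    have hpow : ∀ β : Fin (n + 1) → ℕ, (∀ i ∉ S, β i = 0) →
        ∏ i, t i ^ β i = ∏ i, t' i ^ β i := fun β hβ =>
      Finset.prod_congr rfl fun i _ => by by_cases hi : i ∈ S <;> simp [t', hi, hβ]
    have hface : ∀ i ∉ S, B.lam i (∑ j, t' j • B.x j) = 0 := fun i hi => by
      rw [B.lam_affineCombination ht']
      simp [t', hi]
    calc MvPolynomial.eval t Q
        = ∑ β ∈ s.filter (fun β => ∀ i ∉ S, β i = 0), c β * ∏ i, t' i ^ β i := by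
          simp only [Q, map_sum, MvPolynomial.eval_monomial]
          refine Finset.sum_congr rfl fun β hβ => ?_
          rw [Finsupp.prod_fintype _ _ (by simp), ← hpow β (Finset.mem_filter.mp hβ).2]
          rfl
      _ = ∑ β ∈ s, c β * B.lamPow β (∑ j, t' j • B.x j) := by
          have hsupp : ∀ β ∈ s, c β * ∏ i, t' i ^ β i ≠ 0 → ∀ i ∉ S, β i = 0 :=
            fun β _ hne i hi => by
              by_contra hβi
              exact hne (by simp [Finset.prod_eq_zero (Finset.mem_univ i), t', hi, hβi])
          rw [Finset.sum_filter_of_ne hsupp]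
          simp only [lamPow, B.lam_affineCombination ht']
      _ = 0 := h _ hface
  have hcoeff := congrArg (MvPolynomial.coeff (toF α)) hQ0
  simp only [Q, MvPolynomial.coeff_sum, MvPolynomial.coeff_monomial, EmbeddingLike.apply_eq_iff_eq,
    Finset.sum_ite_eq', Finset.mem_filter, MvPolynomial.coeff_zero] at hcoeff
  exact (if_pos ⟨hα, hαS⟩).symm.trans hcoeff

theorem linearIndepOn_lamPow (r : ℕ) : LinearIndepOn ℝ B.lamPow {α | ∑ i, α i = r} := by
  refine linearIndepOn_iff'.mpr fun s g hs hsum α hα =>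
    B.coeff_eq_zero_of_sum_lamPow_eq_zero_on_face Finset.univ_nonempty (fun β hβ => hs hβ) g
      (fun y _ => ?_) hα (by simp)
  simpa using congrFun hsum y

theorem dlamWedge_vertex_sub {k : ℕ} {l : Fin (n + 1)} {τ ρ : Fin k → Fin (n + 1)}
    (hτ : StrictMono τ) (hρ : StrictMono ρ) (hτl : ∀ t, τ t ≠ l) :
    B.dlamWedge τ (fun s => B.x (ρ s) - B.x l) = if τ = ρ then 1 else 0 := by
  have hentry : (Matrix.of fun s t => B.dlam (τ t) (B.x (ρ s) - B.x l)) =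
      Matrix.of fun s t => if τ t = ρ s then 1 else 0 := by
    ext s t
    simp [dlam_vertex_sub, hτl t]
  change Matrix.det (Matrix.of fun s t => B.dlam (τ t) (B.x (ρ s) - B.x l)) = _
  rw [hentry]
  split_ifs with hτρ
  · subst hτρ
    convert Matrix.det_one (R := ℝ) (n := Fin k)
    ext s t
    simp [Matrix.one_apply, hτ.injective.eq_iff, eq_comm]
  · obtain ⟨t₀, ht₀⟩ : ∃ t₀, τ t₀ ∉ Set.range ρ := by
      by_contra! hall
      exact hτρ (hτ.eq_of_forall_mem_range hρ hall)
    refine Matrix.det_eq_zero_of_column_eq_zero t₀ fun s => ?_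
    simp only [Matrix.of_apply, ite_eq_right_iff, one_ne_zero]
    exact fun h => ht₀ ⟨s, h.symm⟩

theorem linearIndepOn_dlamWedge (k : ℕ) (l : Fin (n + 1)) :
    LinearIndepOn ℝ (B.dlamWedge (k := k)) {τ | StrictMono τ ∧ ∀ t, τ t ≠ l} := by
  classical
  refine linearIndepOn_iff'.mpr fun s g hs hsum ρ hρ => ?_
  have := congrArg (fun η : (Fin n → ℝ) [⋀^Fin k]→ₗ[ℝ] ℝ => η fun t => B.x (ρ t) - B.x l) hsum
  simp only [_root_.sum_apply, AlternatingMap.smul_apply, AlternatingMap.zero_apply,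
    smul_eq_mul] at this
  rwa [Finset.sum_eq_single_of_mem ρ hρ fun τ hτ hτρ => by
    rw [B.dlamWedge_vertex_sub (hs hτ).1 (hs hρ).1 (hs hτ).2, if_neg hτρ, mul_zero],
    B.dlamWedge_vertex_sub (hs hρ).1 (hs hρ).1 (hs hρ).2, if_pos rfl, mul_one] at this

theorem eq_sum_dlamWedge {k : ℕ} (l : Fin (n + 1)) (η : (Fin n → ℝ) [⋀^Fin k]→ₗ[ℝ] ℝ) :
    η = ∑ τ ∈ strictMonoAvoiding n k l, η (fun s => B.x (τ s) - B.x l) • B.dlamWedge τ := by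
  refine (B.vertexBasis l).ext_alternating_of_strictMono fun τ' hτ' => ?_
  set τ : Fin k → Fin (n + 1) := fun s => τ' s
  have hτ : StrictMono τ := fun _ _ h => hτ' h
  have hτl : ∀ s, τ s ≠ l := fun s => (τ' s).2
  have hb : (B.vertexBasis l ∘ τ') = fun s => B.x (τ s) - B.x l := by
    funext s; simp [τ]
  rw [hb, _root_.sum_apply, Finset.sum_eq_single_of_mem τ
    (mem_strictMonoAvoiding.mpr ⟨hτ, hτl⟩) fun ρ hρ hρτ => ?_]
  · rw [AlternatingMap.smul_apply, B.dlamWedge_vertex_sub hτ hτ hτl, if_pos rfl, smul_eq_mul,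
      mul_one]
  · obtain ⟨hρ, hρl⟩ := mem_strictMonoAvoiding.mp hρ
    rw [AlternatingMap.smul_apply, B.dlamWedge_vertex_sub hρ hτ hρl, if_neg hρτ, smul_zero]

def monomialForm {k : ℕ} (q : (Fin (n + 1) → ℕ) × (Fin k → Fin (n + 1))) :
    (Fin n → ℝ) → (Fin n → ℝ) [⋀^Fin k]→ₗ[ℝ] ℝ :=
  fun y => B.lamPow q.1 y • B.dlamWedge q.2

/-- On the facet opposite `x_m`, `λ^α` vanishes if `m ∈ ⟦α⟧` and `dλ_σ` vanishes on tangent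
vectors if `m ∈ ⟦σ⟧`. -/
theorem monomialForm_mem_PLambdaZero {k r : ℕ} {α : Fin (n + 1) → ℕ} {σ : Fin k → Fin (n + 1)}
    (hα : (∑ i, α i) = r) (hfull : suppF α ∪ rangeF σ = Finset.univ) :
    B.monomialForm (α, σ) ∈ PLambdaZero B r k := by
  refine ⟨fun v => ?_, fun S hS y hy v hv => ?_⟩
  · obtain ⟨p, hp, hpe⟩ := B.isPolyDeg_lamPow α
    refine ⟨p * MvPolynomial.C (B.dlamWedge σ v), ?_, fun y => by simp [monomialForm, hpe]⟩
    exact (MvPolynomial.totalDegree_mul _ _).trans (by simpa [hα] using hp)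
  obtain ⟨m, hm⟩ := Finset.card_eq_one.mp (by simp [Finset.card_compl, hS] : Sᶜ.card = 1)
  have hmS : m ∉ S := Finset.mem_compl.mp (by rw [hm]; exact Finset.mem_singleton_self m)
  rcases Finset.mem_union.mp (hfull ▸ Finset.mem_univ m) with hmα | hmσ
  · have hpow : B.lamPow α y = 0 :=
      Finset.prod_eq_zero (Finset.mem_univ m) (by rw [hy m hmS, zero_pow (mem_suppF.mp hmα)])
    simp [monomialForm, hpow]
  · obtain ⟨t, rfl⟩ := mem_rangeF.mp hmσ
    have hdet : B.dlamWedge σ v = 0 :=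
      Matrix.det_eq_zero_of_column_eq_zero t fun s => hv s (σ t) hmS
    simp [monomialForm, hdet]

theorem linearIndepOn_monomialForm {k r : ℕ} (hr : 1 ≤ r) :
    LinearIndepOn ℝ (B.monomialForm (k := k)) (basisIndex n k r) := by
  refine linearIndepOn_smul_of_fibers (π := Prod.fst) (ω := B.dlamWedge ∘ Prod.snd)
    ((B.linearIndepOn_lamPow r).mono ?_) fun α => ?_
  · rintro _ ⟨q, hq, rfl⟩
    exact hq.1
  by_cases hα : (∑ i, α i) = r
  · have hne : (suppF α).Nonempty := suppF_nonempty (by omega)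
    have hm := (suppF α).isLeast_min' hne
    refine LinearIndepOn.comp_of_image
      ((B.linearIndepOn_dlamWedge k ((suppF α).min' hne)).mono ?_) ?_
    · rintro _ ⟨⟨α', σ⟩, ⟨hq, rfl : α' = α⟩, rfl⟩
      obtain ⟨-, hσ, -, hσm⟩ := (mem_basisIndex_iff_of_isLeast hm).mp hq
      exact ⟨hσ, hσm⟩
    · rintro q ⟨-, hq⟩ q' ⟨-, hq'⟩ h
      exact Prod.ext (hq.trans hq'.symm) h
  · refine (linearIndepOn_empty ℝ _).mono ?_
    rintro ⟨_, σ⟩ ⟨hq, rfl : _ = α⟩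
    exact hα hq.1

theorem exists_eq_sum_lamPow_smul {k r : ℕ} {ω : (Fin n → ℝ) → (Fin n → ℝ) [⋀^Fin k]→ₗ[ℝ] ℝ}
    (hω : ω ∈ PLambda n r k) :
    ∃ η : (Fin (n + 1) → ℕ) → (Fin n → ℝ) [⋀^Fin k]→ₗ[ℝ] ℝ,
      ∀ y, ω y = ∑ α ∈ Finset.Nat.antidiagonalTuple (n + 1) r, B.lamPow α y • η α := by
  choose c hc using fun τ : Fin k → Fin (n + 1) =>
    (Submodule.mem_span_image_finset_iff_exists_fun' ℝ).mp
      (B.mem_bernsteinSpan (hω fun s => B.x (τ s) - B.x 0))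
  refine ⟨fun α => ∑ τ ∈ strictMonoAvoiding n k 0, c τ α • B.dlamWedge τ, fun y => ?_⟩
  conv_lhs => rw [B.eq_sum_dlamWedge 0 (ω y)]
  have hcoeff : ∀ τ, ω y (fun s => B.x (τ s) - B.x 0) =
      ∑ α ∈ Finset.Nat.antidiagonalTuple (n + 1) r, c τ α * B.lamPow α y := fun τ => by
    simpa [Finset.sum_apply] using (congrFun (hc τ) y).symm
  simp only [hcoeff, Finset.sum_smul, Finset.smul_sum, smul_smul]
  rw [Finset.sum_comm]
  simp only [mul_comm]

/-- Restrict `ω` to the facet opposite `x_m`, where the `λ^α` with `α_m = 0` are independent. -/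
theorem coeff_apply_eq_zero_of_mem_traceZeroSub {k r : ℕ}
    {ω : (Fin n → ℝ) → (Fin n → ℝ) [⋀^Fin k]→ₗ[ℝ] ℝ} (hω : ω ∈ traceZeroSub B k)
    {η : (Fin (n + 1) → ℕ) → (Fin n → ℝ) [⋀^Fin k]→ₗ[ℝ] ℝ}
    (hη : ∀ y, ω y = ∑ α ∈ Finset.Nat.antidiagonalTuple (n + 1) r, B.lamPow α y • η α)
    {α : Fin (n + 1) → ℕ} (hα : (∑ i, α i) = r) (hr : r ≠ 0) {m : Fin (n + 1)} (hm : α m = 0)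
    {v : Fin k → Fin n → ℝ} (hv : ∀ s, B.dlam m (v s) = 0) : η α v = 0 := by
  obtain ⟨i, hi⟩ := suppF_nonempty (hα ▸ hr)
  refine B.coeff_eq_zero_of_sum_lamPow_eq_zero_on_face (S := {m}ᶜ)
    ⟨i, by simpa using fun him : i = m => mem_suppF.mp hi (him ▸ hm)⟩
    (fun β hβ => Finset.Nat.mem_antidiagonalTuple.mp hβ) (fun β => η β v) (fun y hy => ?_)
    (Finset.Nat.mem_antidiagonalTuple.mpr hα) (by simpa using hm)
  have := hω {m}ᶜ (by simp [Finset.card_compl]) y hy v fun s i hi => by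
    simp only [Finset.mem_compl, Finset.mem_singleton, not_not] at hi
    exact hi ▸ hv s
  simpa [hη, _root_.sum_apply, mul_comm] using this

/-- Expanding `η` in the `dλ_τ` with `τ` avoiding the lowest vertex of `⟦α⟧`, only basis forms
survive: a coefficient with `j ∉ ⟦α, τ⟧` is `η` evaluated on edges in the facet opposite `x_j`. -/
theorem lamPow_smul_mem_span_monomialForm {k r : ℕ} (hr : r ≠ 0) {α : Fin (n + 1) → ℕ}
    (hα : (∑ i, α i) = r) {η : (Fin n → ℝ) [⋀^Fin k]→ₗ[ℝ] ℝ}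
    (hη : ∀ m, α m = 0 → ∀ v : Fin k → Fin n → ℝ, (∀ s, B.dlam m (v s) = 0) → η v = 0) :
    (fun y => B.lamPow α y • η) ∈ Submodule.span ℝ (B.monomialForm '' basisIndex n k r) := by
  have hne := suppF_nonempty (hα ▸ hr)
  set m := (suppF α).min' hne
  have hm := (suppF α).isLeast_min' hne
  have hexpand : (fun y => B.lamPow α y • η) = ∑ τ ∈ strictMonoAvoiding n k m,
      η (fun s => B.x (τ s) - B.x m) • B.monomialForm (α, τ) := by
    funext y
    conv_lhs => rw [B.eq_sum_dlamWedge m η]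
    simp [monomialForm, Finset.smul_sum, smul_smul, mul_comm, Finset.sum_apply]
  rw [hexpand]
  refine Submodule.sum_mem _ fun τ hτ => ?_
  obtain ⟨hτ, hτm⟩ := mem_strictMonoAvoiding.mp hτ
  by_cases hfull : suppF α ∪ rangeF τ = Finset.univ
  · exact Submodule.smul_mem _ _ (Submodule.subset_span
      ⟨(α, τ), (mem_basisIndex_iff_of_isLeast hm).mpr ⟨hα, hτ, hfull, hτm⟩, rfl⟩)
  obtain ⟨j, hj⟩ : ∃ j, j ∉ suppF α ∪ rangeF τ := by
    simpa [Finset.eq_univ_iff_forall] using hfull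
  simp only [Finset.mem_union, not_or, mem_suppF, not_not, mem_rangeF, not_exists] at hj
  have hjm : j ≠ m := by
    rintro rfl
    exact mem_suppF.mp hm.1 hj.1
  rw [hη j hj.1 _ fun s => by simp [dlam_vertex_sub, Ne.symm (hj.2 s), hjm], zero_smul]
  exact Submodule.zero_mem _

theorem span_monomialForm_eq {k r : ℕ} (hr : 1 ≤ r) :
    Submodule.span ℝ (B.monomialForm '' basisIndex n k r) = PLambdaZero B r k := by
  refine le_antisymm (Submodule.span_le.mpr ?_) fun ω hω => ?_
  · rintro _ ⟨⟨α, σ⟩, hq, rfl⟩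
    exact B.monomialForm_mem_PLambdaZero hq.1 hq.2.2.1
  obtain ⟨η, hη⟩ := B.exists_eq_sum_lamPow_smul hω.1
  have hsum : ω = ∑ α ∈ Finset.Nat.antidiagonalTuple (n + 1) r, fun y => B.lamPow α y • η α :=
    funext fun y => by rw [hη, Finset.sum_apply]
  rw [hsum]
  refine Submodule.sum_mem _ fun α hα => ?_
  have hα := Finset.Nat.mem_antidiagonalTuple.mp hα
  exact B.lamPow_smul_mem_span_monomialForm (by omega) hα fun m hm v hv =>
    B.coeff_apply_eq_zero_of_mem_traceZeroSub hω.2 hη hα (by omega) hm hv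

end Simplex

theorem stmt6_general {n : ℕ} (B : Simplex n) (r k : ℕ) (hr : 1 ≤ r) :
    Submodule.span ℝ
        {ω | ∃ (α : Fin (n + 1) → ℕ) (σ : Fin k → Fin (n + 1)),
          (∑ i, α i) = r ∧ StrictMono σ ∧ suppF α ∪ rangeF σ = Finset.univ ∧
          ω = fun y => B.lamPow α y • B.dlamWedge σ} = PLambdaZero B r k
    ∧ LinearIndependent ℝ
        (fun q : {q : (Fin (n + 1) → ℕ) × (Fin k → Fin (n + 1)) //
            (∑ i, q.1 i) = r ∧ StrictMono q.2 ∧ suppF q.1 ∪ rangeF q.2 = Finset.univ ∧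
            ∀ i, (∀ j, j ≤ i → j ∈ rangeF q.2) → q.1 i = 0} =>
          fun y => B.lamPow q.1.1 y • B.dlamWedge q.1.2)
    ∧ Submodule.span ℝ
        (Set.range (fun q : {q : (Fin (n + 1) → ℕ) × (Fin k → Fin (n + 1)) //
            (∑ i, q.1 i) = r ∧ StrictMono q.2 ∧ suppF q.1 ∪ rangeF q.2 = Finset.univ ∧
            ∀ i, (∀ j, j ≤ i → j ∈ rangeF q.2) → q.1 i = 0} =>
          fun y => B.lamPow q.1.1 y • B.dlamWedge q.1.2)) = PLambdaZero B r k := by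
  have hspan := B.span_monomialForm_eq (k := k) hr
  rw [Set.image_eq_range] at hspan
  refine ⟨le_antisymm ?_ ?_, B.linearIndepOn_monomialForm hr, hspan⟩
  · rw [Submodule.span_le]
    rintro _ ⟨α, σ, hα, -, hfull, rfl⟩
    exact B.monomialForm_mem_PLambdaZero hα hfull
  · rw [← hspan]
    refine Submodule.span_mono ?_
    rintro _ ⟨⟨q, hq⟩, rfl⟩
    exact ⟨q.1, q.2, hq.1, hq.2.1, hq.2.2.1, rfl⟩

/-- `{λ^α dλ_σ : |α| = r, σ increasing, ⟦α,σ⟧ = {0,…,n}}` spans `P̊_r Λ^k`, and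
the subfamily with `α_i = 0` for every `i < min ({0,…,n} \ ⟦σ⟧)` (equivalently: `α_i = 0`
whenever every `j ≤ i` belongs to `⟦σ⟧`) is a basis. -/
theorem stmt6 {n : ℕ} (hn : 1 ≤ n) (B : Simplex n) (r k : ℕ) (hr : 1 ≤ r) (hk : k ≤ n) :
    Submodule.span ℝ
        {ω | ∃ (α : Fin (n + 1) → ℕ) (σ : Fin k → Fin (n + 1)),
          (∑ i, α i) = r ∧ StrictMono σ ∧ suppF α ∪ rangeF σ = Finset.univ ∧
          ω = fun y => B.lamPow α y • B.dlamWedge σ} = PLambdaZero B r k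
    ∧ LinearIndependent ℝ
        (fun q : {q : (Fin (n + 1) → ℕ) × (Fin k → Fin (n + 1)) //
            (∑ i, q.1 i) = r ∧ StrictMono q.2 ∧ suppF q.1 ∪ rangeF q.2 = Finset.univ ∧
            ∀ i, (∀ j, j ≤ i → j ∈ rangeF q.2) → q.1 i = 0} =>
          fun y => B.lamPow q.1.1 y • B.dlamWedge q.1.2)
    ∧ Submodule.span ℝ
        (Set.range (fun q : {q : (Fin (n + 1) → ℕ) × (Fin k → Fin (n + 1)) //
            (∑ i, q.1 i) = r ∧ StrictMono q.2 ∧ suppF q.1 ∪ rangeF q.2 = Finset.univ ∧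
            ∀ i, (∀ j, j ≤ i → j ∈ rangeF q.2) → q.1 i = 0} =>
          fun y => B.lamPow q.1.1 y • B.dlamWedge q.1.2)) = PLambdaZero B r k :=
  stmt6_general B r k hr
end
end
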